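/- Let ℓ > 0, μ ∈ ℝ, let Θ : (−ℓ, ∞) → ℝ be continuously differentiable, and set u(x,t) = Θ(x+t) − Θ(t−x). Then the delayed boundary condition u_x(ℓ,t) = μ · u_t(ℓ, t − 2ℓ) holds for all t ∈ (2ℓ, ∞) if and only if Θ′(y) = (μ − 1) Θ′(y − 2ℓ) − μ Θ′(y − 4ℓ) for all y ∈ (3ℓ, ∞). -/

import Mathlib

/-- For `u(x,t) = Θ(x+t) - Θ(t-x)` with `Θ` C¹ on `(-ℓ,∞)`, the delayed boundary
condition `u_x(ℓ,t) = μ u_t(ℓ, t-2ℓ)` holds for all `t ∈ (2ℓ,∞)` iff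
`Θ'(y) = (μ-1)Θ'(y-2ℓ) - μΘ'(y-4ℓ)` for all `y ∈ (3ℓ,∞)`. -/
theorem dAlembert_delayed_condition_iff_recurrence
    (ℓ μ : ℝ) (hℓ : 0 < ℓ) (Θ : ℝ → ℝ)
    (hΘ : ContDiffOn ℝ 1 Θ (Set.Ioi (-ℓ)))
    (u : ℝ → ℝ → ℝ) (hu : ∀ x t : ℝ, u x t = Θ (x + t) - Θ (t - x)) :
    (∀ t ∈ Set.Ioi (2 * ℓ),
        deriv (fun ξ => u ξ t) ℓ = μ * deriv (u ℓ) (t - 2 * ℓ)) ↔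
      (∀ y ∈ Set.Ioi (3 * ℓ),
        deriv Θ y = (μ - 1) * deriv Θ (y - 2 * ℓ) - μ * deriv Θ (y - 4 * ℓ)) := by
  have hd : ∀ z : ℝ, -ℓ < z → DifferentiableAt ℝ Θ z := fun z hz =>
    (hΘ.differentiableOn one_ne_zero z hz).differentiableAt (isOpen_Ioi.mem_nhds hz)
  -- derivative in x at x = ℓ
  have hx : ∀ t : ℝ, 2 * ℓ < t →
      deriv (fun ξ => u ξ t) ℓ = deriv Θ (ℓ + t) + deriv Θ (t - ℓ) := by
    intro t ht
    have h1 : HasDerivAt (fun ξ : ℝ => Θ (ξ + t)) (deriv Θ (ℓ + t)) ℓ := by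
      have := ((hd (ℓ + t) (by linarith)).hasDerivAt).comp ℓ
        ((hasDerivAt_id ℓ).add_const t)
      simpa [Function.comp_def] using this
    have h2 : HasDerivAt (fun ξ : ℝ => Θ (t - ξ)) (-deriv Θ (t - ℓ)) ℓ := by
      have := ((hd (t - ℓ) (by linarith)).hasDerivAt).comp ℓ
        ((hasDerivAt_const ℓ t).sub (hasDerivAt_id ℓ))
      simpa [Function.comp_def] using this
    have : HasDerivAt (fun ξ : ℝ => Θ (ξ + t) - Θ (t - ξ))
        (deriv Θ (ℓ + t) - -deriv Θ (t - ℓ)) ℓ := h1.sub h2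
    have heq : (fun ξ => u ξ t) = fun ξ : ℝ => Θ (ξ + t) - Θ (t - ξ) := by
      funext ξ; exact hu ξ t
    rw [heq, this.deriv]; ring
  -- derivative in t of u ℓ at s (for s > 0)
  have htd : ∀ s : ℝ, 0 < s →
      deriv (u ℓ) s = deriv Θ (ℓ + s) - deriv Θ (s - ℓ) := by
    intro s hs
    have h1 : HasDerivAt (fun τ : ℝ => Θ (ℓ + τ)) (deriv Θ (ℓ + s)) s := by
      have := ((hd (ℓ + s) (by linarith)).hasDerivAt).comp s
        ((hasDerivAt_id s).const_add ℓ)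
      simpa [Function.comp_def] using this
    have h2 : HasDerivAt (fun τ : ℝ => Θ (τ - ℓ)) (deriv Θ (s - ℓ)) s := by
      have := ((hd (s - ℓ) (by linarith)).hasDerivAt).comp s
        ((hasDerivAt_id s).sub_const ℓ)
      simpa [Function.comp_def] using this
    have : HasDerivAt (fun τ : ℝ => Θ (ℓ + τ) - Θ (τ - ℓ))
        (deriv Θ (ℓ + s) - deriv Θ (s - ℓ)) s := h1.sub h2
    have heq : u ℓ = fun τ : ℝ => Θ (ℓ + τ) - Θ (τ - ℓ) := by
      funext τ; exact hu ℓ τ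
    rw [heq, this.deriv]
  constructor
  · intro h y hy
    have hy' : 3 * ℓ < y := hy
    have ht : 2 * ℓ < y - ℓ := by linarith
    have := h (y - ℓ) ht
    rw [hx _ ht, htd _ (by linarith)] at this
    have e1 : ℓ + (y - ℓ) = y := by ring
    have e2 : y - ℓ - ℓ = y - 2 * ℓ := by ring
    have e3 : ℓ + (y - ℓ - 2 * ℓ) = y - 2 * ℓ := by ring
    have e4 : y - ℓ - 2 * ℓ - ℓ = y - 4 * ℓ := by ring
    rw [e1, e2, e3, e4] at this
    linarith [this]
  · intro h t ht
    have ht' : 2 * ℓ < t := ht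
    rw [hx _ ht', htd _ (by linarith)]
    have := h (t + ℓ) (by simp only [Set.mem_Ioi]; linarith)
    have e1 : t + ℓ - 2 * ℓ = t - ℓ := by ring
    have e2 : t + ℓ - 4 * ℓ = t - 3 * ℓ := by ring
    rw [e1, e2] at this
    have e3 : ℓ + t = t + ℓ := by ring
    have e4 : ℓ + (t - 2 * ℓ) = t - ℓ := by ring
    have e5 : t - 2 * ℓ - ℓ = t - 3 * ℓ := by ring
    rw [e3, e4, e5]
    linarith [this]
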